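/- Suppose r > d > 0 and let (h*, k*) with K < h* < k* solve the smooth-fit system (opt-hk). Define V piecewise by: V(x) := x − K for x ≥ k*; V(x) := (k* − K)·ψ̂_{h*}(x)/ψ̂_{h*}(k*) + ((h* − K) + δ)·φ̂_{k*}(x)/φ̂_{k*}(h*) for h* < x < k*; V(x) := (x − K) + δ for K ≤ x ≤ h*; V(x) := δ(x/K)^η for 0 < x < K. Then V is continuous on (0, ∞) and is differentiable at both h* and k*, with V′(h*) = 1 and V′(k*) = 1 (smooth fit). -/

import Mathlib

/-!
Both outer pieces of `V` have slope `1`, so smooth fit says that the middle piece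
`g = (k - K) ψ̂_h / ψ̂_h(k) + ((h - K) + δ) φ̂_k / φ̂_k(h)` has derivative `1` at `h` and at `k`;
it matches the neighbouring pieces in value because `ψ̂_h(h) = φ̂_k(k) = 0`.
For `ψ = x ^ η`, `φ = x ^ ν` the Wronskian is `ψ' φ - ψ φ' = B S'`, and with it the first equation
of the smooth-fit system, multiplied by `S'(h) / φ̂_k(h)`, becomes `g'(h) = 1`. The second equation
is the first one after exchanging `(ψ, h, k - K)` with `(φ, k, (h - K) + δ)`, which leaves `g`
unchanged and turns `B` into `-B`; so it gives `g'(k) = 1`.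
-/

noncomputable section

open Filter Set

theorem ContinuousOn.ite_of_threshold {α β : Type*} [TopologicalSpace α] [LinearOrder α]
    [OrderClosedTopology α] [TopologicalSpace β] {p : α → Prop} [DecidablePred p]
    {f g : α → β} {s : Set α} {a : α} (hlt : ∀ x, a < x → p x) (hle : ∀ x, p x → a ≤ x)
    (hf : ContinuousOn f (s ∩ Ici a)) (hg : ContinuousOn g (s ∩ Iic a)) (hfg : f a = g a) :
    ContinuousOn (fun x => if p x then f x else g x) s := by
  have hp : closure {x | p x} ⊆ Ici a :=
    closure_minimal hle isClosed_Ici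
  have hnp : closure {x | ¬p x} ⊆ Iic a :=
    closure_minimal (fun x hx => not_lt.mp (mt (hlt x) hx)) isClosed_Iic
  refine ContinuousOn.if (fun x hx => ?_) (hf.mono (inter_subset_inter_right s hp))
    (hg.mono (inter_subset_inter_right s hnp))
  rw [frontier_eq_closure_inter_closure] at hx
  rw [le_antisymm (hnp hx.2.2) (hp hx.2.1), hfg]

theorem HasDerivAt.of_eqOn_Ioc_Ico {f g V : ℝ → ℝ} {a b c D : ℝ} (hba : b < a) (hac : a < c)
    (hf : HasDerivAt f D a) (hg : HasDerivAt g D a) (hl : EqOn V f (Ioc b a))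
    (hr : EqOn V g (Ico a c)) : HasDerivAt V D a := by
  have left : HasDerivWithinAt V D (Iic a) a :=
    hf.hasDerivWithinAt.congr_of_eventuallyEq
      (mem_of_superset (Ioc_mem_nhdsLE hba) hl) (hl ⟨hba, le_rfl⟩)
  have right : HasDerivWithinAt V D (Ici a) a :=
    hg.hasDerivWithinAt.congr_of_eventuallyEq
      (mem_of_superset (Ico_mem_nhdsGE hac) hr) (hr ⟨le_rfl, hac⟩)
  simpa only [Iic_union_Ici, hasDerivWithinAt_univ] using left.union right

/-- `hatAt ψ φ h` is the paper's `ψ̂_h` and `hatAt φ ψ k` its `φ̂_k`. -/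
def hatAt (f g : ℝ → ℝ) (a x : ℝ) : ℝ := f x - f a / g a * g x

/-- The middle piece of `V` is `boundaryInterp ψ φ h k (k - K) ((h - K) + δ)`. -/
def boundaryInterp (ψ φ : ℝ → ℝ) (h k A H x : ℝ) : ℝ :=
  A * hatAt ψ φ h x / hatAt ψ φ h k + H * hatAt φ ψ k x / hatAt φ ψ k h

theorem hatAt_self {f g : ℝ → ℝ} {a : ℝ} (ha : g a ≠ 0) : hatAt f g a a = 0 := by
  rw [hatAt, div_mul_cancel₀ _ ha, sub_self]

theorem hasDerivAt_hatAt {f g : ℝ → ℝ} {f' g' x : ℝ} (hf : HasDerivAt f f' x)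
    (hg : HasDerivAt g g' x) (a : ℝ) : HasDerivAt (hatAt f g a) (f' - f a / g a * g') x :=
  hf.sub (hg.const_mul _)

theorem boundaryInterp_swap (ψ φ : ℝ → ℝ) (h k A H : ℝ) :
    boundaryInterp φ ψ k h H A = boundaryInterp ψ φ h k A H := by
  funext x; exact add_comm _ _

theorem boundaryInterp_apply_left {ψ φ : ℝ → ℝ} {h k A H : ℝ} (hφ : φ h ≠ 0)
    (hφk : hatAt φ ψ k h ≠ 0) : boundaryInterp ψ φ h k A H h = H := by
  rw [boundaryInterp, hatAt_self hφ, mul_zero, zero_div, zero_add, mul_div_assoc, div_self hφk,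
    mul_one]

theorem hasDerivAt_boundaryInterp {ψ φ : ℝ → ℝ} {ψ' φ' x : ℝ} (hψ : HasDerivAt ψ ψ' x)
    (hφ : HasDerivAt φ φ' x) (h k A H : ℝ) :
    HasDerivAt (boundaryInterp ψ φ h k A H)
      (A * (ψ' - ψ h / φ h * φ') / hatAt ψ φ h k + H * (φ' - φ k / ψ k * ψ') / hatAt φ ψ k h) x :=
  (((hasDerivAt_hatAt hψ hφ h).const_mul A).div_const _).add
    (((hasDerivAt_hatAt hφ hψ k).const_mul H).div_const _)

theorem hasDerivAt_boundaryInterp_one_of_system {ψ φ : ℝ → ℝ} {ψ' φ' S B h k A H : ℝ}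
    (hψ : HasDerivAt ψ ψ' h) (hφ : HasDerivAt φ φ' h) (hW : ψ' * φ h - ψ h * φ' = B * S)
    (hS : S ≠ 0) (hφh : φ h ≠ 0) (hψk : ψ k ≠ 0) (hφk : hatAt φ ψ k h ≠ 0)
    (hsys : hatAt φ ψ k h / S - deriv (hatAt φ ψ k) h / S * H = B * A / ψ k) :
    HasDerivAt (boundaryInterp ψ φ h k A H) 1 h := by
  have hD : φ h * ψ k - φ k * ψ h ≠ 0 := by
    intro h0; apply hφk; rw [hatAt]; field_simp; linear_combination h0
  rw [(hasDerivAt_hatAt hφ hψ k).deriv] at hsys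
  convert hasDerivAt_boundaryInterp hψ hφ h k A H using 1
  simp only [hatAt] at hsys ⊢
  field_simp at hsys ⊢
  linear_combination hsys - A * hW

def smoothFitCandidate (K δ η h k : ℝ) (g : ℝ → ℝ) (x : ℝ) : ℝ :=
  if k ≤ x then x - K else if h < x then g x else if K ≤ x then (x - K) + δ else δ * (x / K) ^ η

section SmoothFitCandidate

variable {K δ η h k : ℝ} {g : ℝ → ℝ}

theorem continuousOn_smoothFitCandidate (hK : 0 < K) (hKh : K < h) (hhk : h < k)
    (hg : ContinuousOn g (Icc h k)) (hgh : g h = h - K + δ) (hgk : g k = k - K) :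
    ContinuousOn (smoothFitCandidate K δ η h k g) (Ioi 0) := by
  have lower : ContinuousOn (fun x => if K ≤ x then (x - K) + δ else δ * (x / K) ^ η) (Ioi 0) :=
    ContinuousOn.ite_of_threshold (fun _ => le_of_lt) (fun _ => id) (by fun_prop)
      (fun x hx => ((continuousAt_id.div_const K).rpow_const
        (Or.inl (div_pos hx.1 hK).ne')).continuousWithinAt.const_mul δ)
      (by rw [div_self hK.ne', Real.one_rpow]; ring)
  refine ContinuousOn.ite_of_threshold (fun _ => le_of_lt) (fun _ => id) (by fun_prop) ?_
    (by simp [hhk, hgk])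
  refine ContinuousOn.ite_of_threshold (fun _ => id) (fun _ => le_of_lt)
    (hg.mono fun x hx => ⟨hx.2, hx.1.2⟩) (lower.mono fun x hx => hx.1.1) (by simp [hKh.le, hgh])

theorem hasDerivAt_smoothFitCandidate_lower (hKh : K < h) (hhk : h < k) (hg : HasDerivAt g 1 h)
    (hgh : g h = h - K + δ) : HasDerivAt (smoothFitCandidate K δ η h k g) 1 h := by
  refine HasDerivAt.of_eqOn_Ioc_Ico hKh hhk (((hasDerivAt_id h).sub_const K).add_const δ) hg
    (fun x hx => ?_) (fun x hx => ?_)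
  · simp [smoothFitCandidate, hx.2, (hx.2.trans_lt hhk).not_ge, hx.1.le]
  · rcases hx.1.eq_or_lt with rfl | hhx
    · simp [smoothFitCandidate, hhk.not_ge, hKh.le, hgh]
    · simp [smoothFitCandidate, hx.2.not_ge, hhx]

theorem hasDerivAt_smoothFitCandidate_upper (hhk : h < k) (hg : HasDerivAt g 1 k)
    (hgk : g k = k - K) : HasDerivAt (smoothFitCandidate K δ η h k g) 1 k := by
  refine HasDerivAt.of_eqOn_Ioc_Ico hhk (lt_add_one k) hg ((hasDerivAt_id k).sub_const K)
    (fun x hx => ?_) (fun x hx => ?_)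
  · rcases hx.2.eq_or_lt with rfl | hxk
    · simp [smoothFitCandidate, hgk]
    · simp [smoothFitCandidate, hxk.not_ge, hx.1]
  · simp [smoothFitCandidate, hx.1]

end SmoothFitCandidate

theorem rpow_wronskian {x : ℝ} (hx : 0 < x) (η ν : ℝ) :
    η * x ^ (η - 1) * x ^ ν - x ^ η * (ν * x ^ (ν - 1)) = (η - ν) * x ^ (η + ν - 1) := by
  simp only [Real.rpow_sub hx, Real.rpow_add hx, Real.rpow_one]
  ring

theorem rpow_mul_rpow_lt_rpow_mul_rpow {h k η ν : ℝ} (hh : 0 < h) (hhk : h < k) (hνη : ν < η) :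
    h ^ η * k ^ ν < h ^ ν * k ^ η := by
  have hk : 0 < k := hh.trans hhk
  have key := Real.rpow_lt_rpow hh.le hhk (sub_pos.mpr hνη)
  rwa [Real.rpow_sub hh, Real.rpow_sub hk,
    div_lt_div_iff₀ (Real.rpow_pos_of_pos hh ν) (Real.rpow_pos_of_pos hk ν),
    mul_comm (k ^ η)] at key

theorem hatAt_rpow_pos_right {h k η ν : ℝ} (hh : 0 < h) (hhk : h < k) (hνη : ν < η) :
    0 < hatAt (· ^ η) (· ^ ν) h k := by
  rw [hatAt, sub_pos, div_mul_eq_mul_div, div_lt_iff₀ (Real.rpow_pos_of_pos hh ν), mul_comm (k ^ η)]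
  exact rpow_mul_rpow_lt_rpow_mul_rpow hh hhk hνη

theorem hatAt_rpow_pos_left {h k η ν : ℝ} (hh : 0 < h) (hhk : h < k) (hνη : ν < η) :
    0 < hatAt (· ^ ν) (· ^ η) k h := by
  rw [hatAt, sub_pos, div_mul_eq_mul_div, div_lt_iff₀ (Real.rpow_pos_of_pos (hh.trans hhk) η)]
  linarith [rpow_mul_rpow_lt_rpow_mul_rpow hh hhk hνη]

theorem charRoots_lt {r d σ lam κ η ν : ℝ} (hr : 0 < r) (hσ : 0 < σ)
    (hlam : lam = √(2 * r + ((r - d - σ ^ 2 / 2) / σ) ^ 2))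
    (hη : η = lam / σ - κ) (hν : ν = -(lam / σ) - κ) : ν < η := by
  have hlam_pos : 0 < lam := hlam ▸ Real.sqrt_pos.mpr (by positivity)
  have : 0 < lam / σ := div_pos hlam_pos hσ
  linarith

theorem charRoots_add_sub_one {r d σ lam κ η ν : ℝ} (hσ : σ ≠ 0)
    (hκ : κ = (r - d - σ ^ 2 / 2) / σ ^ 2)
    (hη : η = lam / σ - κ) (hν : ν = -(lam / σ) - κ) :
    η + ν - 1 = -(2 * (r - d) / σ ^ 2) := by
  subst hη hν hκ
  field_simp
  ring

theorem candidate_continuous_smooth_fit_general (r d σ K δ : ℝ)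
    (hrd : r > d) (hd : 0 < d) (hσ : 0 < σ) (hK : 0 < K)
    (lam κ η ν B : ℝ)
    (hlam : lam = Real.sqrt (2 * r + ((r - d - σ ^ 2 / 2) / σ) ^ 2))
    (hκ : κ = (r - d - σ ^ 2 / 2) / σ ^ 2)
    (hη : η = lam / σ - κ) (hν : ν = -(lam / σ) - κ) (hB : B = η - ν)
    (ψ φ Sd : ℝ → ℝ) (hatψ hatφ : ℝ → ℝ → ℝ)
    (hψ : ψ = fun x => x ^ η) (hφ : φ = fun x => x ^ ν)
    (hhatψ : hatψ = fun h x => ψ x - (ψ h / φ h) * φ x)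
    (hhatφ : hatφ = fun k x => φ x - (φ k / ψ k) * ψ x)
    (hSd : Sd = fun x => x ^ (-(2 * (r - d) / σ ^ 2)))
    (h k : ℝ) (hKh : K < h) (hhk : h < k)
    (hsys1 : hatφ k h / Sd h - (deriv (hatφ k) h / Sd h) * ((h - K) + δ) =
      B * (k - K) / ψ k)
    (hsys2 : hatψ h k / Sd k - (deriv (hatψ h) k / Sd k) * (k - K) =
      -B * ((h - K) + δ) / φ h)
    (V : ℝ → ℝ)
    (hV : V = fun x =>
      if k ≤ x then x - K
      else if h < x then
        (k - K) * hatψ h x / hatψ h k + ((h - K) + δ) * hatφ k x / hatφ k h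
      else if K ≤ x then (x - K) + δ
      else δ * (x / K) ^ η) :
    ContinuousOn V (Set.Ioi 0) ∧ HasDerivAt V 1 h ∧ HasDerivAt V 1 k := by
  have hh : 0 < h := hK.trans hKh
  have hk : 0 < k := hh.trans hhk
  have hνη : ν < η := charRoots_lt (hd.trans hrd) hσ hlam hη hν
  have hSd_eq : ∀ x, Sd x = x ^ (η + ν - 1) := by
    intro x; rw [hSd, charRoots_add_sub_one hσ.ne' hκ hη hν]
  subst hψ hφ hB hhatψ hhatφ hV
  set g := boundaryInterp (· ^ η) (· ^ ν) h k (k - K) (h - K + δ)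
  have hderiv : ∀ {x} (p : ℝ), 0 < x → HasDerivAt (· ^ p) (p * x ^ (p - 1)) x :=
    fun p hx => Real.hasDerivAt_rpow_const (Or.inl hx.ne')
  have hpow_ne : ∀ {x : ℝ} (p : ℝ), 0 < x → x ^ p ≠ 0 := fun p hx => (Real.rpow_pos_of_pos hx p).ne'
  have hW : ∀ {x}, 0 < x →
      η * x ^ (η - 1) * x ^ ν - x ^ η * (ν * x ^ (ν - 1)) = (η - ν) * Sd x :=
    fun hx => by rw [hSd_eq]; exact rpow_wronskian hx η ν
  have hψhat := (hatAt_rpow_pos_right hh hhk hνη).ne'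
  have hφhat := (hatAt_rpow_pos_left hh hhk hνη).ne'
  have hg_swap : g = boundaryInterp (· ^ ν) (· ^ η) k h (h - K + δ) (k - K) :=
    (boundaryInterp_swap _ _ _ _ _ _).symm
  have hg_h : HasDerivAt g 1 h :=
    hasDerivAt_boundaryInterp_one_of_system (hderiv η hh) (hderiv ν hh) (hW hh)
      (hSd_eq h ▸ hpow_ne _ hh) (hpow_ne ν hh) (hpow_ne η hk) hφhat hsys1
  have hg_k : HasDerivAt g 1 k := hg_swap ▸
    hasDerivAt_boundaryInterp_one_of_system (hderiv ν hk) (hderiv η hk)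
      (by linear_combination -hW hk) (hSd_eq k ▸ hpow_ne _ hk) (hpow_ne η hk) (hpow_ne ν hh)
      hψhat hsys2
  have hgh : g h = h - K + δ := boundaryInterp_apply_left (hpow_ne ν hh) hφhat
  have hgk : g k = k - K := hg_swap ▸ boundaryInterp_apply_left (hpow_ne η hk) hψhat
  have hg : ContinuousOn g (Icc h k) := fun x hx =>
    have hx0 : 0 < x := hh.trans_le hx.1
    (hasDerivAt_boundaryInterp (hderiv η hx0) (hderiv ν hx0) _ _ _ _).continuousAt
      |>.continuousWithinAt
  exact ⟨continuousOn_smoothFitCandidate hK hKh hhk hg hgh hgk,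
    hasDerivAt_smoothFitCandidate_lower hKh hhk hg_h hgh,
    hasDerivAt_smoothFitCandidate_upper hhk hg_k hgk⟩

/-- The candidate value function `V` for `r > d > 0` built from a solution `(h*, k*)` of the
smooth-fit system is continuous on `(0, ∞)` and differentiable at `h*` and `k*` with
derivative `1` at both points (smooth fit). -/
theorem candidate_continuous_smooth_fit (r d σ K δ : ℝ)
    (hrd : r > d) (hd : 0 < d) (hσ : 0 < σ) (hK : 0 < K) (hδ : 0 < δ)
    (lam κ η ν B : ℝ)
    (hlam : lam = Real.sqrt (2 * r + ((r - d - σ ^ 2 / 2) / σ) ^ 2))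
    (hκ : κ = (r - d - σ ^ 2 / 2) / σ ^ 2)
    (hη : η = lam / σ - κ) (hν : ν = -(lam / σ) - κ) (hB : B = η - ν)
    (ψ φ Sd : ℝ → ℝ) (hatψ hatφ : ℝ → ℝ → ℝ)
    (hψ : ψ = fun x => x ^ η) (hφ : φ = fun x => x ^ ν)
    (hhatψ : hatψ = fun h x => ψ x - (ψ h / φ h) * φ x)
    (hhatφ : hatφ = fun k x => φ x - (φ k / ψ k) * ψ x)
    (hSd : Sd = fun x => x ^ (-(2 * (r - d) / σ ^ 2)))
    (h k : ℝ) (hKh : K < h) (hhk : h < k)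
    (hsys1 : hatφ k h / Sd h - (deriv (hatφ k) h / Sd h) * ((h - K) + δ) =
      B * (k - K) / ψ k)
    (hsys2 : hatψ h k / Sd k - (deriv (hatψ h) k / Sd k) * (k - K) =
      -B * ((h - K) + δ) / φ h)
    (V : ℝ → ℝ)
    (hV : V = fun x =>
      if k ≤ x then x - K
      else if h < x then
        (k - K) * hatψ h x / hatψ h k + ((h - K) + δ) * hatφ k x / hatφ k h
      else if K ≤ x then (x - K) + δ
      else δ * (x / K) ^ η) :
    ContinuousOn V (Set.Ioi 0) ∧ HasDerivAt V 1 h ∧ HasDerivAt V 1 k :=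
  candidate_continuous_smooth_fit_general r d σ K δ hrd hd hσ hK lam κ η ν B hlam hκ hη hν hB ψ φ Sd
    hatψ hatφ hψ hφ hhatψ hhatφ hSd h k hKh hhk hsys1 hsys2 V hV

end
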